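/- Let 1 ≤ p ≤ ∞ and let E be a normed space. Then the minimal L_p(X)-quantization of E (the norm of L_p(X) ⊗_ε E on L_p(X) ⊗ E) is p-convex: if u, v ∈ L_p(X) ⊗ E have supports P_{X'}, P_{X''} with X' ∩ X'' of measure zero (P · u = u, Q · v = v), then ‖u + v‖_min ≤ (‖u‖_min^p + ‖v‖_min^p)^{1/p} (with the convention max(‖u‖,‖v‖) when p = ∞). -/

import Mathlib

/-!
For a functional `f` with `‖f‖ ≤ 1`, the slice `(id ⊗ f) u ∈ L_p(X)` is fixed by `P_{X'}`
because slicing commutes with `P_{X'} ⊗ id`; so it vanishes a.e. off `X'`, and likewise the slice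
of `v` vanishes off `X''`. Pointwise a.e. one of the two slices is zero, whence
`‖(id ⊗ f)(u + v)‖_p^p = ‖(id ⊗ f) u‖_p^p + ‖(id ⊗ f) v‖_p^p ≤ ‖u‖_min^p + ‖v‖_min^p`
(a maximum for `p = ∞`), and the supremum over `f` gives the claim.
-/

open MeasureTheory TensorProduct
open scoped ENNReal

/-- The minimal (injective) tensor norm on `L ⊗ E`:
`‖u‖_min = sup{‖(id ⊗ f)(u)‖ : f ∈ E*, ‖f‖ ≤ 1}`. -/
noncomputable def minNorm {L E : Type*} [NormedAddCommGroup L] [NormedSpace ℂ L]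
    [NormedAddCommGroup E] [NormedSpace ℂ E] (u : L ⊗[ℂ] E) : ℝ :=
  sSup {r : ℝ | ∃ f : E →L[ℂ] ℂ, ‖f‖ ≤ 1 ∧
    r = ‖(TensorProduct.rid ℂ L) (LinearMap.lTensor L (f : E →ₗ[ℂ] ℂ) u)‖}

section TensorSlice

variable {L E : Type*} [AddCommGroup L] [Module ℂ L] [AddCommGroup E] [Module ℂ E]

/-- The map `id ⊗ f : L ⊗ E → L ⊗ ℂ ≅ L` of the definition of `minNorm`. -/
noncomputable def tensorSlice (f : E →ₗ[ℂ] ℂ) : L ⊗[ℂ] E →ₗ[ℂ] L :=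
  (TensorProduct.rid ℂ L).toLinearMap ∘ₗ LinearMap.lTensor L f

@[simp]
lemma tensorSlice_tmul (f : E →ₗ[ℂ] ℂ) (ξ : L) (x : E) : tensorSlice f (ξ ⊗ₜ x) = f x • ξ := by
  simp [tensorSlice]

lemma tensorSlice_rTensor (f : E →ₗ[ℂ] ℂ) (T : L →ₗ[ℂ] L) (w : L ⊗[ℂ] E) :
    tensorSlice f (LinearMap.rTensor E T w) = T (tensorSlice f w) := by
  induction w using TensorProduct.induction_on with
  | zero => simp
  | tmul ξ x => simp
  | add a b ha hb => simp only [map_add, ha, hb]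

end TensorSlice

section MinNorm

variable {L E : Type*} [NormedAddCommGroup L] [NormedSpace ℂ L]
  [NormedAddCommGroup E] [NormedSpace ℂ E]

lemma exists_forall_norm_tensorSlice_le (u : L ⊗[ℂ] E) :
    ∃ C, ∀ f : E →L[ℂ] ℂ, ‖f‖ ≤ 1 → ‖tensorSlice (f : E →ₗ[ℂ] ℂ) u‖ ≤ C := by
  induction u using TensorProduct.induction_on with
  | zero => exact ⟨0, fun f _ => by simp⟩
  | tmul ξ x =>
    refine ⟨‖x‖ * ‖ξ‖, fun f hf => ?_⟩
    rw [tensorSlice_tmul, norm_smul]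
    gcongr
    exact f.le_of_opNorm_le hf x |>.trans_eq (one_mul _)
  | add a b ha hb =>
    obtain ⟨C₁, h₁⟩ := ha
    obtain ⟨C₂, h₂⟩ := hb
    exact ⟨C₁ + C₂, fun f hf => by rw [map_add]; exact norm_add_le_of_le (h₁ f hf) (h₂ f hf)⟩

lemma norm_tensorSlice_le_minNorm (u : L ⊗[ℂ] E) {f : E →L[ℂ] ℂ} (hf : ‖f‖ ≤ 1) :
    ‖tensorSlice (f : E →ₗ[ℂ] ℂ) u‖ ≤ minNorm u := by
  obtain ⟨C, hC⟩ := exists_forall_norm_tensorSlice_le u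
  exact le_csSup ⟨C, by rintro r ⟨g, hg, rfl⟩; exact hC g hg⟩ ⟨f, hf, rfl⟩

lemma minNorm_le {u : L ⊗[ℂ] E} {c : ℝ}
    (h : ∀ f : E →L[ℂ] ℂ, ‖f‖ ≤ 1 → ‖tensorSlice (f : E →ₗ[ℂ] ℂ) u‖ ≤ c) : minNorm u ≤ c :=
  csSup_le ⟨_, 0, by simp, rfl⟩ (by rintro r ⟨f, hf, rfl⟩; exact h f hf)

theorem minNorm_add_le_of_norm_add_le {T S : L →ₗ[ℂ] L} {Φ : ℝ → ℝ → ℝ}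
    (hΦ : ∀ a b c d, 0 ≤ a → 0 ≤ b → a ≤ c → b ≤ d → Φ a b ≤ Φ c d)
    (hTS : ∀ g h, T g = g → S h = h → ‖g + h‖ ≤ Φ ‖g‖ ‖h‖)
    {u v : L ⊗[ℂ] E} (hu : LinearMap.rTensor E T u = u) (hv : LinearMap.rTensor E S v = v) :
    minNorm (u + v) ≤ Φ (minNorm u) (minNorm v) := by
  refine minNorm_le fun f hf => ?_
  have hTu : T (tensorSlice (f : E →ₗ[ℂ] ℂ) u) = tensorSlice (f : E →ₗ[ℂ] ℂ) u := by
    rw [← tensorSlice_rTensor, hu]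
  have hSv : S (tensorSlice (f : E →ₗ[ℂ] ℂ) v) = tensorSlice (f : E →ₗ[ℂ] ℂ) v := by
    rw [← tensorSlice_rTensor, hv]
  rw [map_add]
  exact (hTS _ _ hTu hSv).trans <| hΦ _ _ _ _ (norm_nonneg _) (norm_nonneg _)
    (norm_tensorSlice_le_minNorm u hf) (norm_tensorSlice_le_minNorm v hf)

end MinNorm

section DisjointSupport

variable {X F : Type*} [MeasurableSpace X] {μ : Measure X} [NormedAddCommGroup F]

lemma ae_eq_zero_or_eq_zero_of_ae_eq_indicator {f g : X → F} {A B : Set X}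
    (hf : f =ᵐ[μ] A.indicator f) (hg : g =ᵐ[μ] B.indicator g) (hAB : μ (A ∩ B) = 0) :
    ∀ᵐ x ∂μ, f x = 0 ∨ g x = 0 := by
  filter_upwards [hf, hg, measure_eq_zero_iff_ae_notMem.mp hAB] with x hfx hgx hx
  by_cases hxA : x ∈ A
  · exact .inr (hgx.trans (Set.indicator_of_notMem (fun hxB => hx ⟨hxA, hxB⟩) _))
  · exact .inl (hfx.trans (Set.indicator_of_notMem hxA _))

variable {f g : X → F}

lemma lintegral_enorm_add_rpow_of_ae_disjoint (hfg : ∀ᵐ x ∂μ, f x = 0 ∨ g x = 0)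
    (hf : AEStronglyMeasurable f μ) {q : ℝ} (hq : 0 < q) :
    ∫⁻ x, ‖f x + g x‖ₑ ^ q ∂μ = ∫⁻ x, ‖f x‖ₑ ^ q ∂μ + ∫⁻ x, ‖g x‖ₑ ^ q ∂μ := by
  rw [← lintegral_add_left' (hf.enorm.pow_const q)]
  refine lintegral_congr_ae (hfg.mono fun x hx => ?_)
  rcases hx with hx | hx <;> simp [hx, ENNReal.zero_rpow_of_pos hq]

lemma eLpNorm_add_rpow_of_ae_disjoint (hfg : ∀ᵐ x ∂μ, f x = 0 ∨ g x = 0)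
    (hf : AEStronglyMeasurable f μ) {p : ℝ≥0∞} (hp₀ : p ≠ 0) (hp : p ≠ ∞) :
    eLpNorm (f + g) p μ ^ p.toReal = eLpNorm f p μ ^ p.toReal + eLpNorm g p μ ^ p.toReal := by
  have hq := ENNReal.toReal_pos hp₀ hp
  simp only [eLpNorm_eq_eLpNorm' hp₀ hp, ← lintegral_rpow_enorm_eq_rpow_eLpNorm' hq, Pi.add_apply]
  exact lintegral_enorm_add_rpow_of_ae_disjoint hfg hf hq

lemma eLpNorm_top_add_le_max_of_ae_disjoint (hfg : ∀ᵐ x ∂μ, f x = 0 ∨ g x = 0) :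
    eLpNorm (f + g) ∞ μ ≤ max (eLpNorm f ∞ μ) (eLpNorm g ∞ μ) := by
  simp only [eLpNorm_exponent_top]
  refine essSup_le_of_ae_le _ ?_
  filter_upwards [hfg, ae_le_eLpNormEssSup (f := f), ae_le_eLpNormEssSup (f := g)]
    with x hx hfx hgx
  rcases hx with hx | hx
  · simpa [hx] using le_max_of_le_right hgx
  · simpa [hx] using le_max_of_le_left hfx

end DisjointSupport

namespace MeasureTheory.Lp

variable {X F : Type*} [MeasurableSpace X] {μ : Measure X} [NormedAddCommGroup F]

lemma norm_add_rpow_of_ae_disjoint {p : ℝ≥0∞} (hp₀ : p ≠ 0) (hp : p ≠ ∞) {f g : Lp F p μ}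
    (hfg : ∀ᵐ x ∂μ, f x = 0 ∨ g x = 0) :
    ‖f + g‖ ^ p.toReal = ‖f‖ ^ p.toReal + ‖g‖ ^ p.toReal := by
  have hq := ENNReal.toReal_pos hp₀ hp
  simp only [norm_def, ENNReal.toReal_rpow]
  rw [← ENNReal.toReal_add (ENNReal.rpow_ne_top_of_nonneg hq.le (eLpNorm_ne_top f))
    (ENNReal.rpow_ne_top_of_nonneg hq.le (eLpNorm_ne_top g)),
    ← eLpNorm_add_rpow_of_ae_disjoint hfg (Lp.aestronglyMeasurable f) hp₀ hp,
    eLpNorm_congr_ae (coeFn_add f g)]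

lemma norm_add_le_max_of_ae_disjoint {f g : Lp F ∞ μ} (hfg : ∀ᵐ x ∂μ, f x = 0 ∨ g x = 0) :
    ‖f + g‖ ≤ max ‖f‖ ‖g‖ := by
  rw [norm_def, norm_def, norm_def, ← ENNReal.toReal_max (eLpNorm_ne_top f) (eLpNorm_ne_top g),
    eLpNorm_congr_ae (coeFn_add f g)]
  exact ENNReal.toReal_mono (max_ne_top (eLpNorm_ne_top f) (eLpNorm_ne_top g))
    (eLpNorm_top_add_le_max_of_ae_disjoint hfg)

end MeasureTheory.Lp

theorem minimal_quantization_p_convex_general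
    (X : Type*) [MeasurableSpace X] (μ : Measure X)
    (p : ℝ≥0∞) [Fact (1 ≤ p)]
    (E : Type*) [NormedAddCommGroup E] [NormedSpace ℂ E]
    -- the indicator-multiplication projections on L_p(X)
    (P : Set X → (Lp ℂ p μ →L[ℂ] Lp ℂ p μ))
    (hP : ∀ (s : Set X) (f : Lp ℂ p μ), (P s f : X → ℂ) =ᵐ[μ] s.indicator f)
    (u v : (Lp ℂ p μ) ⊗[ℂ] E) (A B : Set X)
    (hAB : μ (A ∩ B) = 0)
    (hu : LinearMap.rTensor E ((P A : Lp ℂ p μ →L[ℂ] Lp ℂ p μ) : Lp ℂ p μ →ₗ[ℂ] Lp ℂ p μ) u = u)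
    (hv : LinearMap.rTensor E ((P B : Lp ℂ p μ →L[ℂ] Lp ℂ p μ) : Lp ℂ p μ →ₗ[ℂ] Lp ℂ p μ) v = v) :
    (p ≠ ∞ →
      minNorm (u + v) ≤ (minNorm u ^ p.toReal + minNorm v ^ p.toReal) ^ (1 / p.toReal)) ∧
    (p = ∞ → minNorm (u + v) ≤ max (minNorm u) (minNorm v)) := by
  have hdisj : ∀ g h : Lp ℂ p μ, P A g = g → P B h = h → ∀ᵐ x ∂μ, g x = 0 ∨ h x = 0 := by
    intro g h hg hh
    refine ae_eq_zero_or_eq_zero_of_ae_eq_indicator ?_ ?_ hAB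
    · simpa only [hg] using hP A g
    · simpa only [hh] using hP B h
  refine ⟨fun hp => ?_, fun hp => ?_⟩
  · have hp₀ : p ≠ 0 := (zero_lt_one.trans_le Fact.out).ne'
    refine minNorm_add_le_of_norm_add_le
      (Φ := fun a b => (a ^ p.toReal + b ^ p.toReal) ^ (1 / p.toReal))
      (fun a b c d _ _ hac hbd => by gcongr) ?_ hu hv
    intro g h hg hh
    rw [← Lp.norm_add_rpow_of_ae_disjoint hp₀ hp (hdisj g h hg hh), one_div,
      Real.rpow_rpow_inv (norm_nonneg _) (ENNReal.toReal_pos hp₀ hp).ne']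
  · subst hp
    exact minNorm_add_le_of_norm_add_le (fun a b c d _ _ => max_le_max)
      (fun g h hg hh => Lp.norm_add_le_max_of_ae_disjoint (hdisj g h hg hh)) hu hv

/-- The minimal `L_p(X)`-quantization of a normed space `E` is `p`-convex:
if `u, v ∈ L_p(X) ⊗ E` have supports `P_{X'}, P_{X''}` with `X' ∩ X''` of measure zero,
then `‖u + v‖_min ≤ (‖u‖_min^p + ‖v‖_min^p)^{1/p}` (with the max convention for `p = ∞`). -/
theorem minimal_quantization_p_convex
    (X : Type*) [MeasurableSpace X] (μ : Measure X)
    (p : ℝ≥0∞) [Fact (1 ≤ p)]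
    (E : Type*) [NormedAddCommGroup E] [NormedSpace ℂ E]
    -- the indicator-multiplication projections on L_p(X)
    (P : Set X → (Lp ℂ p μ →L[ℂ] Lp ℂ p μ))
    (hP : ∀ (s : Set X) (f : Lp ℂ p μ), (P s f : X → ℂ) =ᵐ[μ] s.indicator f)
    (u v : (Lp ℂ p μ) ⊗[ℂ] E) (A B : Set X)
    (hA : MeasurableSet A) (hB : MeasurableSet B) (hAB : μ (A ∩ B) = 0)
    (hu : LinearMap.rTensor E ((P A : Lp ℂ p μ →L[ℂ] Lp ℂ p μ) : Lp ℂ p μ →ₗ[ℂ] Lp ℂ p μ) u = u)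
    (hv : LinearMap.rTensor E ((P B : Lp ℂ p μ →L[ℂ] Lp ℂ p μ) : Lp ℂ p μ →ₗ[ℂ] Lp ℂ p μ) v = v) :
    (p ≠ ∞ →
      minNorm (u + v) ≤ (minNorm u ^ p.toReal + minNorm v ^ p.toReal) ^ (1 / p.toReal)) ∧
    (p = ∞ → minNorm (u + v) ≤ max (minNorm u) (minNorm v)) :=
  minimal_quantization_p_convex_general X μ p E P hP u v A B hAB hu hv
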